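/- Let λ ∈ ℝ with −1 < λ < 0, and define S₁ := {(z, z̄) : z ∈ ℂ} and S₂ := {(z, (1+λ)z̄ + λz + (Im z)²) : z ∈ ℂ}. Then: (a) S₁ ∪ S₂ is not locally polynomially convex at (0,0), i.e., there is no r > 0 such that (S₁ ∪ S₂) ∩ B̄(0;ρ) is polynomially convex for every 0 < ρ ≤ r; and (b) for every t > 0, the set {z ∈ ℂ : Re z = t/2 and 2λ·Re z + (Im z)² = 0} equals the two-point set {t/2 + i√(t|λ|), t/2 − i√(t|λ|)} and hence has exactly two connected components. -/

import Mathlib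

open Complex Metric Set

noncomputable def pEval (P : MvPolynomial (Fin 2) ℂ) (z : ℂ × ℂ) : ℂ :=
  MvPolynomial.eval ![z.1, z.2] P

def PolyConvex (K : Set (ℂ × ℂ)) : Prop :=
  {z : ℂ × ℂ | ∀ P : MvPolynomial (Fin 2) ℂ,
      ‖pEval P z‖ ≤ ⨆ w ∈ K, ‖pEval P w‖} = K

def LocPolyConvexAt (X : Set (ℂ × ℂ)) (p : ℂ × ℂ) : Prop :=
  ∃ r > 0, ∀ ρ : ℝ, 0 < ρ → ρ ≤ r → PolyConvex (X ∩ closedBall p ρ)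

def TotallyRealSub (T : Submodule ℝ (ℂ × ℂ)) : Prop :=
  ∀ v ∈ T, Complex.I • v ∈ T → v = 0

def IsTangentAt (k : ℕ∞) (S : Set (ℂ × ℂ)) (p : ℂ × ℂ) (T : Submodule ℝ (ℂ × ℂ)) : Prop :=
  ∃ (U : Set (ℝ × ℝ)) (f : ℝ × ℝ → ℂ × ℂ) (u : ℝ × ℝ),
    IsOpen U ∧ u ∈ U ∧ f u = p ∧
    ContDiffOn ℝ k f U ∧ Set.InjOn f U ∧
    (∀ v ∈ U, Function.Injective (fderiv ℝ f v)) ∧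
    (∃ V ∈ nhds p, S ∩ V = (f '' U) ∩ V) ∧
    T = LinearMap.range ((fderiv ℝ f u) : (ℝ × ℝ) →ₗ[ℝ] (ℂ × ℂ))

def IsCkSurface (k : ℕ∞) (S : Set (ℂ × ℂ)) : Prop :=
  ∀ p ∈ S, ∃ T, IsTangentAt k S p T

def IsTotallyRealCkSurface (k : ℕ∞) (S : Set (ℂ × ℂ)) : Prop :=
  ∀ p ∈ S, ∃ T, IsTangentAt k S p T ∧ TotallyRealSub T

def IsTotallyRealPlane (M : Submodule ℝ (ℂ × ℂ)) : Prop :=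
  Module.finrank ℝ M = 2 ∧ TotallyRealSub M

/-!
The analytic disc `z ↦ (z, t - z)` meets `S₁` exactly over the line `Re z = t / 2` and `S₂`
exactly over the parabola `(2 + 2λ) Re z + (Im z)² = t`. For `-1 < λ < 0` these two curves bound a
nonempty region `U` which shrinks to `0` with `t`. By the maximum principle the disc over `U` lies
in the polynomial hull of `(S₁ ∪ S₂) ∩ B̄(0; r)` once `t` is small, while its points over the
interior of `U` are not in `S₁ ∪ S₂`.
-/

open Filter Topology

def polyHull (K : Set (ℂ × ℂ)) : Set (ℂ × ℂ) :=
  {z | ∀ P : MvPolynomial (Fin 2) ℂ, ‖pEval P z‖ ≤ ⨆ w ∈ K, ‖pEval P w‖}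

theorem polyConvex_iff_polyHull_eq {K : Set (ℂ × ℂ)} : PolyConvex K ↔ polyHull K = K :=
  Iff.rfl

theorem differentiable_pEval (P : MvPolynomial (Fin 2) ℂ) : Differentiable ℂ (pEval P) := by
  intro z
  have hcoord : ∀ i, AnalyticAt ℂ (fun q : ℂ × ℂ ↦ ![q.1, q.2] i) z := by
    intro i
    fin_cases i
    · exact analyticAt_fst
    · exact analyticAt_snd
  exact (AnalyticAt.aeval_mvPolynomial hcoord P).differentiableAt

theorem norm_pEval_le_iSup {K : Set (ℂ × ℂ)} (hK : IsCompact K) (P : MvPolynomial (Fin 2) ℂ)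
    {w : ℂ × ℂ} (hw : w ∈ K) : ‖pEval P w‖ ≤ ⨆ w ∈ K, ‖pEval P w‖ := by
  refine le_ciSup₂ (f := fun w (_ : w ∈ K) ↦ ‖pEval P w‖) ?_ w hw
  refine ((hK.image (differentiable_pEval P).continuous.norm).bddAbove).mono ?_
  rintro _ ⟨_, ⟨v, rfl⟩, hv, rfl⟩
  exact ⟨v, hv, rfl⟩

theorem mem_polyHull_of_frontier_subset {K : Set (ℂ × ℂ)} (hK : IsCompact K) {U : Set ℂ}
    (hU : Bornology.IsBounded U) {f : ℂ → ℂ × ℂ} (hf : Differentiable ℂ f)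
    (hfU : ∀ z ∈ frontier U, f z ∈ K) {z : ℂ} (hz : z ∈ closure U) : f z ∈ polyHull K :=
  fun P ↦ Complex.norm_le_of_forall_mem_frontier_norm_le hU
    ((differentiable_pEval P).comp hf).diffContOnCl
    (fun w hw ↦ norm_pEval_le_iSup hK P (hfU w hw)) hz

theorem isClosed_setOf_exists_eq_mk {X Y : Type*} [TopologicalSpace X] [TopologicalSpace Y]
    [T2Space Y] {g : X → Y} (hg : Continuous g) : IsClosed {q : X × Y | ∃ x, q = (x, g x)} := by
  have : {q : X × Y | ∃ x, q = (x, g x)} = {q | q.2 = g q.1} := by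
    ext ⟨a, b⟩
    simp [Prod.ext_iff, eq_comm]
  rw [this]
  exact isClosed_eq continuous_snd (hg.comp continuous_fst)

theorem mk_mem_setOf_exists_eq_mk_iff {X Y : Type*} {g : X → Y} {x : X} {y : Y} :
    (x, y) ∈ {q : X × Y | ∃ x, q = (x, g x)} ↔ y = g x := by
  constructor
  · rintro ⟨v, h⟩
    rw [Prod.mk.injEq] at h
    rw [h.2, h.1]
  · rintro rfl
    exact ⟨x, rfl⟩

def conjGraph : Set (ℂ × ℂ) :=
  {q : ℂ × ℂ | ∃ z : ℂ, q = (z, (starRingEnd ℂ) z)}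

def perturbedConj (lam : ℝ) (z : ℂ) : ℂ :=
  ((1 : ℂ) + (lam : ℂ)) * (starRingEnd ℂ) z + (lam : ℂ) * z + ((z.im ^ 2 : ℝ) : ℂ)

def perturbedConjGraph (lam : ℝ) : Set (ℂ × ℂ) :=
  {q : ℂ × ℂ | ∃ z : ℂ, q = (z, perturbedConj lam z)}

theorem perturbedConj_re (lam : ℝ) (z : ℂ) :
    (perturbedConj lam z).re = (1 + 2 * lam) * z.re + z.im ^ 2 := by
  simp only [perturbedConj, add_re, mul_re, one_re, ofReal_re, conj_re, add_im, one_im, ofReal_im,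
    add_zero, conj_im, mul_neg, zero_mul, neg_zero, sub_zero, add_left_inj]
  ring

theorem perturbedConj_im (lam : ℝ) (z : ℂ) : (perturbedConj lam z).im = -z.im := by
  simp only [perturbedConj, add_im, mul_im, add_re, one_re, ofReal_re, conj_im, mul_neg, one_im,
    ofReal_im, add_zero, conj_re, zero_mul]
  ring

theorem isClosed_conjGraph : IsClosed conjGraph :=
  isClosed_setOf_exists_eq_mk Complex.continuous_conj

theorem isClosed_perturbedConjGraph (lam : ℝ) : IsClosed (perturbedConjGraph lam) :=
  isClosed_setOf_exists_eq_mk (by unfold perturbedConj; fun_prop)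

theorem mk_sub_mem_conjGraph_iff (t : ℝ) (z : ℂ) :
    (z, (t : ℂ) - z) ∈ conjGraph ↔ z.re = t / 2 := by
  rw [conjGraph, mk_mem_setOf_exists_eq_mk_iff, Complex.ext_iff]
  simp only [sub_re, ofReal_re, conj_re, sub_im, ofReal_im, zero_sub, conj_im, and_true]
  constructor <;> intro h <;> linarith

theorem mk_sub_mem_perturbedConjGraph_iff (lam t : ℝ) (z : ℂ) :
    (z, (t : ℂ) - z) ∈ perturbedConjGraph lam ↔ (2 + 2 * lam) * z.re + z.im ^ 2 = t := by
  rw [perturbedConjGraph, mk_mem_setOf_exists_eq_mk_iff, Complex.ext_iff, perturbedConj_re,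
    perturbedConj_im]
  simp only [sub_re, ofReal_re, sub_im, ofReal_im, zero_sub, and_true]
  constructor <;> intro h <;> linarith

theorem norm_mk_sub_le {ε t : ℝ} (hε : 0 < ε) (ht : 0 ≤ t) {z : ℂ} (hre : t / 2 ≤ z.re)
    (hcurve : ε * z.re + z.im ^ 2 ≤ t) : ‖((z, (t : ℂ) - z) : ℂ × ℂ)‖ ≤ t + t / ε + √t := by
  have hre_le : z.re ≤ t / ε := by
    rw [le_div_iff₀ hε]
    nlinarith [sq_nonneg z.im]
  have him : |z.im| ≤ √t := Real.abs_le_sqrt (by nlinarith)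
  have hz : ‖z‖ ≤ t / ε + √t := by
    calc ‖z‖ ≤ |z.re| + |z.im| := norm_le_abs_re_add_abs_im z
      _ ≤ t / ε + √t := by rw [abs_of_nonneg (by linarith)]; linarith
  refine max_le (by linarith) ?_
  calc ‖(t : ℂ) - z‖ ≤ ‖(t : ℂ)‖ + ‖z‖ := norm_sub_le _ _
    _ ≤ t + t / ε + √t := by rw [norm_real, Real.norm_of_nonneg ht]; linarith

theorem exists_pos_add_div_add_sqrt_lt (ε : ℝ) {r : ℝ} (hr : 0 < r) :
    ∃ t > 0, t + t / ε + √t < r := by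
  have hlim : Tendsto (fun t : ℝ ↦ t + t / ε + √t) (𝓝 0) (𝓝 0) := by
    have hcont : Continuous fun t : ℝ ↦ t + t / ε + √t := by fun_prop
    simpa using hcont.tendsto 0
  have hsmall : ∀ᶠ t in 𝓝[>] (0 : ℝ), t + t / ε + √t < r :=
    (hlim.eventually (gt_mem_nhds hr)).filter_mono nhdsWithin_le_nhds
  exact (hsmall.and self_mem_nhdsWithin).exists.imp fun t ht ↦ ⟨ht.2, ht.1⟩

def lineParabolaRegion (ε t : ℝ) : Set ℂ :=
  {z | t / 2 < z.re} ∩ {z | ε * z.re + z.im ^ 2 < t}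

theorem closure_lineParabolaRegion_subset (ε t : ℝ) :
    closure (lineParabolaRegion ε t) ⊆ {z | t / 2 ≤ z.re ∧ ε * z.re + z.im ^ 2 ≤ t} :=
  (closure_inter_subset_inter_closure _ _).trans <| Set.inter_subset_inter
    (closure_lt_subset_le (by fun_prop) (by fun_prop))
    (closure_lt_subset_le (by fun_prop) (by fun_prop))

theorem frontier_lineParabolaRegion_subset (ε t : ℝ) :
    frontier (lineParabolaRegion ε t) ⊆ {z | z.re = t / 2 ∨ ε * z.re + z.im ^ 2 = t} := by
  intro z hz
  rcases frontier_inter_subset _ _ hz with ⟨h, -⟩ | ⟨-, h⟩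
  · exact .inl (frontier_lt_subset_eq (by fun_prop) (by fun_prop) h).symm
  · exact .inr (frontier_lt_subset_eq (by fun_prop) (by fun_prop) h)

theorem not_locPolyConvexAt_conjGraph_union {lam : ℝ} (hlam₁ : -1 < lam) (hlam₂ : lam < 0) :
    ¬ LocPolyConvexAt (conjGraph ∪ perturbedConjGraph lam) 0 := by
  set ε := 2 + 2 * lam with hε
  have hε₀ : 0 < ε := by linarith
  rintro ⟨r, hr, hconvex⟩
  obtain ⟨t, ht, htr⟩ := exists_pos_add_div_add_sqrt_lt ε hr
  set U := lineParabolaRegion ε t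
  have hball : ∀ z ∈ closure U, ((z, (t : ℂ) - z) : ℂ × ℂ) ∈ closedBall 0 r := fun z hz ↦ by
    obtain ⟨hre, hcurve⟩ := closure_lineParabolaRegion_subset ε t hz
    rw [mem_closedBall_zero_iff]
    exact (norm_mk_sub_le hε₀ ht.le hre hcurve).trans htr.le
  have hfrontier : ∀ z ∈ frontier U,
      ((z, (t : ℂ) - z) : ℂ × ℂ) ∈ (conjGraph ∪ perturbedConjGraph lam) ∩ closedBall 0 r := by
    intro z hz
    refine ⟨?_, hball z (frontier_subset_closure hz)⟩
    rw [Set.mem_union, mk_sub_mem_conjGraph_iff, mk_sub_mem_perturbedConjGraph_iff]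
    exact frontier_lineParabolaRegion_subset ε t hz
  have hbounded : Bornology.IsBounded U := by
    refine (isBounded_closedBall (x := (0 : ℂ)) (r := r)).subset fun z hz ↦ ?_
    have := hball z (subset_closure hz)
    rw [mem_closedBall_zero_iff] at this ⊢
    exact (norm_fst_le _).trans this
  obtain ⟨x, hx₁, hx₂⟩ : ∃ x : ℝ, t / 2 < x ∧ x < t / ε :=
    exists_between (div_lt_div_of_pos_left ht hε₀ (by linarith))
  have hxU : (x : ℂ) ∈ U := ⟨by simpa using hx₁, by simpa [← lt_div_iff₀' hε₀] using hx₂⟩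
  have hhull := mem_polyHull_of_frontier_subset
    ((isCompact_closedBall 0 r).inter_left
      (isClosed_conjGraph.union (isClosed_perturbedConjGraph lam)))
    hbounded (f := fun z ↦ (z, (t : ℂ) - z)) (by fun_prop) hfrontier (subset_closure hxU)
  rw [polyConvex_iff_polyHull_eq.mp (hconvex r hr le_rfl)] at hhull
  rcases hhull.1 with h | h
  · rw [mk_sub_mem_conjGraph_iff, ofReal_re] at h
    linarith
  · rw [mk_sub_mem_perturbedConjGraph_iff, ofReal_re, ofReal_im] at h
    rw [lt_div_iff₀' hε₀] at hx₂
    linarith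

theorem setOf_re_eq_and_im_sq_eq (a : ℝ) {s : ℝ} (hs : 0 ≤ s) :
    {z : ℂ | z.re = a ∧ z.im ^ 2 = s} = {(a : ℂ) + (√s : ℂ) * I, (a : ℂ) - (√s : ℂ) * I} := by
  ext z
  simp only [Set.mem_ofPred_eq, Set.mem_insert_iff, Set.mem_singleton_iff, Complex.ext_iff,
    add_re, sub_re, add_im, sub_im, ofReal_re, ofReal_im, mul_re, mul_im, I_re, I_im]
  rw [← Real.sq_sqrt hs, sq_eq_sq_iff_eq_or_eq_neg]
  constructor
  · rintro ⟨hre, him | him⟩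
    · exact .inl ⟨by simp [hre], by simp [him]⟩
    · exact .inr ⟨by simp [hre], by simp [him]⟩
  · rintro (⟨hre, him⟩ | ⟨hre, him⟩)
    · exact ⟨by simpa using hre, .inl (by simpa using him)⟩
    · exact ⟨by simpa using hre, .inr (by simpa using him)⟩

theorem ofReal_add_mul_I_ne_sub (a : ℝ) {b : ℝ} (hb : b ≠ 0) :
    (a : ℂ) + (b : ℂ) * I ≠ (a : ℂ) - (b : ℂ) * I := by
  intro h
  have := congrArg Complex.im h
  simp only [add_im, sub_im, ofReal_im, mul_im, ofReal_re, I_re, I_im] at this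
  apply hb
  linarith

/-- with φ(z) = (Im z)² and −1 < λ < 0, the union S₁ ∪ S₂ fails to be
locally polynomially convex at 0, yet for every t > 0 the fibre set
{Re z = t/2, 2λ Re z + (Im z)² = 0} is a two-point set (two connected components). -/
theorem dieu_condition_not_necessary (lam : ℝ) (hlam₁ : -1 < lam) (hlam₂ : lam < 0) :
    (¬ LocPolyConvexAt
        ({q : ℂ × ℂ | ∃ z : ℂ, q = (z, (starRingEnd ℂ) z)} ∪
         {q : ℂ × ℂ | ∃ z : ℂ,
           q = (z, ((1 : ℂ) + (lam : ℂ)) * (starRingEnd ℂ) z + (lam : ℂ) * z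
                 + ((z.im ^ 2 : ℝ) : ℂ))}) 0) ∧
    (∀ t : ℝ, 0 < t →
      {z : ℂ | z.re = t / 2 ∧ 2 * lam * z.re + z.im ^ 2 = 0} =
        {((t / 2 : ℝ) : ℂ) + (Real.sqrt (t * |lam|) : ℂ) * Complex.I,
         ((t / 2 : ℝ) : ℂ) - (Real.sqrt (t * |lam|) : ℂ) * Complex.I} ∧
      ((t / 2 : ℝ) : ℂ) + (Real.sqrt (t * |lam|) : ℂ) * Complex.I ≠
        ((t / 2 : ℝ) : ℂ) - (Real.sqrt (t * |lam|) : ℂ) * Complex.I) := by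
  refine ⟨not_locPolyConvexAt_conjGraph_union hlam₁ hlam₂, fun t ht ↦ ?_⟩
  have hpos : 0 < t * |lam| := mul_pos ht (abs_pos.mpr hlam₂.ne)
  have hfibre : {z : ℂ | z.re = t / 2 ∧ 2 * lam * z.re + z.im ^ 2 = 0} =
      {z : ℂ | z.re = t / 2 ∧ z.im ^ 2 = t * |lam|} := by
    ext z
    refine and_congr_right fun hre ↦ ?_
    rw [hre, abs_of_neg hlam₂]
    constructor <;> intro h <;> linarith
  rw [hfibre, setOf_re_eq_and_im_sq_eq _ hpos.le]
  exact ⟨rfl, ofReal_add_mul_I_ne_sub _ (Real.sqrt_ne_zero'.mpr hpos)⟩
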